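/- arXiv:1106.1619 — 3 statements merged into one kernel-verified Lean document; each statement's English description precedes it below -/
import Mathlib

section
/- If q is an odd prime power with q ≡ 3 (mod 8) or q ≡ -3 (mod 8), then x^4 y^4 ≠ -id for every x, y ∈ SL(2,q). -/
abbrev SL2 (F : Type) [CommRing F] := Matrix.SpecialLinearGroup (Fin 2) F

open Matrix

section aux
variable {F : Type} [Field F]

private lemma sq_eq (M : Matrix (Fin 2) (Fin 2) F) (h : M.det = 1) :
    M ^ 2 = M.trace • M - 1 := by
  rw [Matrix.det_fin_two] at h
  ext i j
  fin_cases i <;> fin_cases j <;>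
    simp [pow_two, Matrix.mul_apply, Matrix.trace_fin_two, Fin.sum_univ_two,
      Matrix.one_apply] <;>
    first
      | linear_combination (-1 : F) * h
      | ring

private lemma tr_sq (M : Matrix (Fin 2) (Fin 2) F) (h : M.det = 1) :
    (M ^ 2).trace = M.trace ^ 2 - 2 := by
  rw [Matrix.det_fin_two] at h
  simp [pow_two, Matrix.mul_apply, Matrix.trace_fin_two, Fin.sum_univ_two]
  linear_combination (-2 : F) * h

private lemma pow4 (M : Matrix (Fin 2) (Fin 2) F) (h : M.det = 1) :
    M ^ 4 = (M.trace ^ 3 - 2 * M.trace) • M + (1 - M.trace ^ 2) • 1 := by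
  have hd : (M ^ 2).det = 1 := by rw [Matrix.det_pow, h, one_pow]
  have h2 := sq_eq (M ^ 2) hd
  rw [tr_sq M h] at h2
  rw [show (4 : ℕ) = 2 * 2 from rfl, pow_mul, h2, sq_eq M h]
  ext i j
  fin_cases i <;> fin_cases j <;>
    simp [Matrix.one_apply] <;> ring

private lemma pow4_ne_neg_one (h2 : ¬ IsSquare (2 : F))
    (M : Matrix (Fin 2) (Fin 2) F) (hdet : M.det = 1) : M ^ 4 ≠ -1 := by
  intro h4
  set t := M.trace with ht
  have hM4 : (t ^ 3 - 2 * t) • M + (1 - t ^ 2) • (1 : Matrix (Fin 2) (Fin 2) F) = -1 := by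
    rw [← pow4 M hdet, h4]
  have key : (t ^ 3 - 2 * t) • M = (t ^ 2 - 2) • (1 : Matrix (Fin 2) (Fin 2) F) := by
    linear_combination (norm := module) hM4
  by_cases hc : t ^ 3 - 2 * t = 0
  · have h0 : (t ^ 2 - 2) • (1 : Matrix (Fin 2) (Fin 2) F) = 0 := by
      rw [← key, hc, zero_smul]
    have he : t ^ 2 - 2 = 0 := by
      have := congr_fun (congr_fun h0 0) 0
      simpa using this
    exact h2 ⟨t, by linear_combination -he⟩
  · have hM : M = ((t ^ 3 - 2 * t)⁻¹ * (t ^ 2 - 2)) • 1 := by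
      apply smul_right_injective (Matrix (Fin 2) (Fin 2) F) hc
      dsimp only
      rw [key, smul_smul, mul_inv_cancel_left₀ hc]
    set c := (t ^ 3 - 2 * t)⁻¹ * (t ^ 2 - 2) with hcdef
    have hdet' : c ^ 2 = 1 := by
      rw [hM] at hdet
      simpa using hdet
    rw [hM, smul_pow, one_pow] at h4
    have h00 : c ^ 4 = -1 := by
      have := congr_fun (congr_fun h4 0) 0
      simpa using this
    have : (2 : F) = 0 := by
      have : c ^ 4 = 1 := by rw [show (4:ℕ) = 2*2 from rfl, pow_mul, hdet', one_pow]
      linear_combination h00 - this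
    exact h2 ⟨0, by linear_combination this⟩

end aux

/-- If `q ≡ ±3 (mod 8)` is an odd prime power, then `x⁴y⁴ ≠ -id` for all
`x, y ∈ SL(2,q)`. -/
theorem x4y4_ne_neg_id
    (p e q : ℕ) (hp : p.Prime) (he : 1 ≤ e) (hq : q = p ^ e) (hodd : Odd q)
    (hmod : q % 8 = 3 ∨ q % 8 = 5)
    (F : Type) [Field F] [Fintype F] (hF : Fintype.card F = q) :
    ∀ x y : SL2 F, ((x ^ 4 * y ^ 4 : SL2 F) : Matrix (Fin 2) (Fin 2) F) ≠ -1 := by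
  intro x y h
  have h2 : ¬ IsSquare (2 : F) := by
    intro hs
    rcases FiniteField.isSquare_two_iff.mp hs with ⟨h3, h5⟩
    rw [hF] at h3 h5
    tauto
  set X : Matrix (Fin 2) (Fin 2) F := ↑x with hXdef
  set Y : Matrix (Fin 2) (Fin 2) F := ↑y with hYdef
  have hXdet : X.det = 1 := x.prop
  have hYdet : Y.det = 1 := y.prop
  simp only [Matrix.SpecialLinearGroup.coe_mul, Matrix.SpecialLinearGroup.coe_pow,
    ← hXdef, ← hYdef] at h
  -- h : X ^ 4 * Y ^ 4 = -1
  set s := X.trace with hs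
  set u := Y.trace with hu
  have hX4 := pow4 X hXdet
  have hY4 := pow4 Y hYdet
  rw [← hs] at hX4
  rw [← hu] at hY4
  -- the "inverse" of Y
  set Yi : Matrix (Fin 2) (Fin 2) F := u • 1 - Y with hYidef
  have hYsq := sq_eq Y hYdet
  rw [← hu] at hYsq
  have hYYi : Y * Yi = 1 := by
    rw [hYidef, mul_sub, mul_smul_comm, mul_one, ← pow_two, hYsq]
    abel
  have hYidet : Yi.det = 1 := by
    have := congrArg Matrix.det hYYi
    rw [Matrix.det_mul, hYdet, one_mul, Matrix.det_one] at this
    exact this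
  have hYitr : Yi.trace = u := by
    rw [hYidef]
    simp [Matrix.trace_smul, Matrix.trace_one, ← hu]
    ring
  have hYi4 := pow4 Yi hYidet
  rw [hYitr] at hYi4
  have hcomY : Commute Y Yi := by
    rw [hYidef]
    exact ((Commute.one_right Y).smul_right u).sub_right (Commute.refl Y)
  have hY4Yi4 : Y ^ 4 * Yi ^ 4 = 1 := by rw [← hcomY.mul_pow, hYYi, one_pow]
  have hXeq : X ^ 4 = -Yi ^ 4 := by
    calc X ^ 4 = X ^ 4 * (Y ^ 4 * Yi ^ 4) := by rw [hY4Yi4, mul_one]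
      _ = (X ^ 4 * Y ^ 4) * Yi ^ 4 := by rw [mul_assoc]
      _ = -Yi ^ 4 := by rw [h, neg_one_mul]
  have hlin : (s ^ 3 - 2 * s) • X + (1 - s ^ 2) • (1 : Matrix (Fin 2) (Fin 2) F)
      = -((u ^ 3 - 2 * u) • (u • 1 - Y) + (1 - u ^ 2) • 1) := by
    rw [← hX4, ← hYidef, ← hYi4, hXeq]
  have key : (s ^ 3 - 2 * s) • X
      = (u ^ 3 - 2 * u) • Y + (s ^ 2 - u ^ 4 + 3 * u ^ 2 - 2) • (1 : Matrix (Fin 2) (Fin 2) F) := by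
    linear_combination (norm := module) hlin
  by_cases hsz : s ^ 3 - 2 * s = 0
  · have : s = 0 ∨ s ^ 2 - 2 = 0 := by
      have hm : s * (s ^ 2 - 2) = 0 := by linear_combination hsz
      exact mul_eq_zero.mp hm
    rcases this with h0 | h2'
    · have hX1 : X ^ 4 = 1 := by
        rw [hX4, h0]
        simp
      have hYn : Y ^ 4 = -1 := by
        rw [hX1, one_mul] at h
        exact h
      exact pow4_ne_neg_one h2 Y hYdet hYn
    · exact h2 ⟨s, by linear_combination -h2'⟩
  by_cases huz : u ^ 3 - 2 * u = 0
  · have : u = 0 ∨ u ^ 2 - 2 = 0 := by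
      have hm : u * (u ^ 2 - 2) = 0 := by linear_combination huz
      exact mul_eq_zero.mp hm
    rcases this with h0 | h2'
    · have hY1 : Y ^ 4 = 1 := by
        rw [hY4, h0]
        simp
      have hXn : X ^ 4 = -1 := by
        rw [hY1, mul_one] at h
        exact h
      exact pow4_ne_neg_one h2 X hXdet hXn
    · exact h2 ⟨u, by linear_combination -h2'⟩
  · have hXform : X = ((s ^ 3 - 2 * s)⁻¹ * (u ^ 3 - 2 * u)) • Y
        + ((s ^ 3 - 2 * s)⁻¹ * (s ^ 2 - u ^ 4 + 3 * u ^ 2 - 2)) • 1 := by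
      apply smul_right_injective (Matrix (Fin 2) (Fin 2) F) hsz
      dsimp only
      rw [key, smul_add, smul_smul, smul_smul, mul_inv_cancel_left₀ hsz,
        mul_inv_cancel_left₀ hsz]
    have hcomXY : Commute X Y := by
      rw [hXform]
      exact (((Commute.refl Y).smul_left _).add_left ((Commute.one_left Y).smul_left _))
    have hXY4 : (X * Y) ^ 4 = -1 := by rw [hcomXY.mul_pow, h]
    have hXYdet : (X * Y).det = 1 := by rw [Matrix.det_mul, hXdet, hYdet, one_mul]
    exact pow4_ne_neg_one h2 (X * Y) hXYdet hXY4
end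

section
/- Let q be a prime power, k ≥ 1, and let a₁, b₁, …, a_k, b_k ≥ 1 be integers; set A = a₁ + … + a_k and B = b₁ + … + b_k. Then there exist two-variable polynomials p₀, p₁, …, p_k over F_q such that for all x, y ∈ SL(2,q), writing s = tr(x), u = tr(xy), t = tr(y), one has tr(x^{a₁} y^{b₁} ⋯ x^{a_k} y^{b_k}) = Σ_{r=0}^{k} u^r · p_r(s,t), where: p_k(s,t) = s^{A-k} t^{B-k} + Φ(s,t) for some polynomial Φ with deg_s Φ ≤ A-k, deg_t Φ ≤ B-k and deg_s Φ + deg_t Φ < A + B - 2k; and for every r < k, deg_s p_r ≤ A, deg_t p_r ≤ B and the total degree of p_r is at most A + B - 2k. -/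
noncomputable def trSL {F : Type} [CommRing F] (x : SL2 F) : F :=
  Matrix.trace (x : Matrix (Fin 2) (Fin 2) F)

/-- The coefficient of the monomial `s^i t^j` in a two-variable polynomial,
where `s` is the variable `0` and `t` is the variable `1`. -/
noncomputable def coeff2 {F : Type} [CommRing F] (P : MvPolynomial (Fin 2) F) (i j : ℕ) : F :=
  MvPolynomial.coeff (Finsupp.single (0 : Fin 2) i + Finsupp.single (1 : Fin 2) j) P

namespace TPW

lemma trSL_def {F : Type} [CommRing F] (g : SL2 F) :
    trSL g = Matrix.trace (g : Matrix (Fin 2) (Fin 2) F) := rfl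

variable {F : Type} [Field F]

noncomputable def c (F : Type) [Field F] (n : ℕ) : Polynomial F := Polynomial.dickson 1 1 n

lemma c_zero : c F 0 = 2 := by
  rw [c, Polynomial.dickson_zero]; norm_num

lemma c_one : c F 1 = Polynomial.X := Polynomial.dickson_one 1 1

lemma c_add_two (n : ℕ) : c F (n+2) = Polynomial.X * c F (n+1) - c F n := by
  rw [c, c, c, Polynomial.dickson_add_two]; simp

lemma c_natDegree_le (n : ℕ) : (c F n).natDegree ≤ n := by
  induction n using Nat.strong_induction_on with
  | _ n ih =>
    match n with
    | 0 => simp [c_zero]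
    | 1 => simp [c_one, Polynomial.natDegree_X_le]
    | (n+2) =>
      rw [c_add_two]
      refine le_trans (Polynomial.natDegree_sub_le _ _) (sup_le ?_ ?_)
      · refine le_trans (Polynomial.natDegree_mul_le) ?_
        have h1 := ih (n+1) (by omega)
        have hX : (Polynomial.X : Polynomial F).natDegree ≤ 1 := Polynomial.natDegree_X_le
        omega
      · have := ih n (by omega); omega

lemma c_coeff_le (n m : ℕ) (h : n < m) : (c F n).coeff m = 0 :=
  Polynomial.coeff_eq_zero_of_natDegree_lt (lt_of_le_of_lt (c_natDegree_le n) h)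

lemma c_coeff_top (n : ℕ) (h : 1 ≤ n) : (c F n).coeff n = 1 := by
  induction n using Nat.strong_induction_on with
  | _ n ih =>
    match n with
    | 1 => simp [c_one]
    | 2 =>
      rw [c_add_two, Polynomial.coeff_sub, Polynomial.coeff_X_mul, c_one, c_zero]
      simp [Polynomial.coeff_X_one]
    | (n+3) =>
      rw [c_add_two, Polynomial.coeff_sub, Polynomial.coeff_X_mul]
      have h1 : (c F (n+2)).coeff (n+2) = 1 := ih (n+2) (by omega) (by omega)
      have h2 : (c F (n+1)).coeff (n+3) = 0 := c_coeff_le (n+1) (n+3) (by omega)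
      rw [h1, h2, sub_zero]


variable {F : Type} [Field F]

lemma CH_fin_two (a b c d : F) (hd : a * d - b * c = 1) :
    !![a, b; c, d] * !![a, b; c, d] = (a + d) • !![a, b; c, d] - 1 := by
  ext i j
  fin_cases i <;> fin_cases j <;>
    simp [Matrix.mul_apply, Fin.sum_univ_two, Matrix.one_apply]
  · linear_combination -hd
  · ring
  · ring
  · linear_combination -hd

lemma sl2_CH (x : SL2 F) :
    (x : Matrix (Fin 2) (Fin 2) F) * x = trSL x • (x : Matrix (Fin 2) (Fin 2) F) - 1 := by
  have hd := x.prop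
  rw [Matrix.det_fin_two] at hd
  have hs : trSL x = (x : Matrix (Fin 2) (Fin 2) F) 0 0 + (x : Matrix (Fin 2) (Fin 2) F) 1 1 :=
    Matrix.trace_fin_two _
  rw [hs, Matrix.eta_fin_two (x : Matrix (Fin 2) (Fin 2) F)]
  exact CH_fin_two _ _ _ _ hd

lemma sl2_pow_add_two (x : SL2 F) (n : ℕ) :
    ((x ^ (n+2) : SL2 F) : Matrix (Fin 2) (Fin 2) F)
      = trSL x • ((x ^ (n+1) : SL2 F) : Matrix (Fin 2) (Fin 2) F)
        - ((x ^ n : SL2 F) : Matrix (Fin 2) (Fin 2) F) := by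
  have : ((x ^ (n+2) : SL2 F) : Matrix (Fin 2) (Fin 2) F)
      = ((x ^ n : SL2 F) : Matrix (Fin 2) (Fin 2) F) * ((x : Matrix (Fin 2) (Fin 2) F) * x) := by
    rw [show x ^ (n+2) = x ^ n * (x * x) by rw [pow_add, pow_two]]
    simp [Matrix.SpecialLinearGroup.coe_mul, mul_assoc]
  rw [this, sl2_CH]
  simp [mul_sub, mul_smul_comm, Matrix.SpecialLinearGroup.coe_mul, Matrix.SpecialLinearGroup.coe_pow]
  rw [← Matrix.SpecialLinearGroup.coe_pow, ← Matrix.SpecialLinearGroup.coe_pow, pow_succ]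
  simp [Matrix.SpecialLinearGroup.coe_mul]

lemma trSL_pow (x : SL2 F) (n : ℕ) : trSL (x ^ n) = (c F n).eval (trSL x) := by
  induction n using Nat.strong_induction_on with
  | _ n ih =>
    match n with
    | 0 => simp [trSL, c_zero, Matrix.trace_one]
    | 1 => simp [c_one]
    | (n+2) =>
      rw [c_add_two]
      have := sl2_pow_add_two x n
      rw [trSL_def, this]
      simp only [Matrix.trace_sub, Matrix.trace_smul, smul_eq_mul]
      rw [← trSL_def, ← trSL_def, ih (n+1) (by omega), ih n (by omega)]
      simp [Polynomial.eval_sub, Polynomial.eval_mul, Polynomial.eval_X]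

/-- the word in SL2 -/
def w (x y : SL2 F) (l : List (ℕ × ℕ)) : SL2 F := (l.map fun p => x ^ p.1 * y ^ p.2).prod

lemma w_append (x y : SL2 F) (l₁ l₂ : List (ℕ × ℕ)) :
    w x y (l₁ ++ l₂) = w x y l₁ * w x y l₂ := by
  simp [w]

lemma w_cons (x y : SL2 F) (p : ℕ × ℕ) (l : List (ℕ × ℕ)) :
    w x y (p :: l) = x ^ p.1 * y ^ p.2 * w x y l := by
  simp [w]

lemma trSL_mul_comm (g h : SL2 F) : trSL (g * h) = trSL (h * g) := by
  simp only [trSL, Matrix.SpecialLinearGroup.coe_mul]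
  exact Matrix.trace_mul_comm _ _

/-- main trace reduction, a-version -/
lemma TA (x y : SL2 F) (l₁ l₂ : List (ℕ × ℕ)) (a b : ℕ) :
    trSL (w x y (l₁ ++ (a+2, b) :: l₂))
      = trSL x * trSL (w x y (l₁ ++ (a+1, b) :: l₂))
        - trSL (w x y (l₁ ++ (a, b) :: l₂)) := by
  simp only [w_append, w_cons]
  simp only [trSL, Matrix.SpecialLinearGroup.coe_mul]
  rw [Matrix.SpecialLinearGroup.coe_pow x (a+2), ← Matrix.SpecialLinearGroup.coe_pow x, sl2_pow_add_two]
  simp [sub_mul, mul_sub, Matrix.smul_mul, Matrix.mul_smul, Matrix.trace_sub, Matrix.trace_smul,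
    Matrix.SpecialLinearGroup.coe_pow, smul_eq_mul, trSL_def]

/-- main trace reduction, b-version -/
lemma TB (x y : SL2 F) (l₁ l₂ : List (ℕ × ℕ)) (a b : ℕ) :
    trSL (w x y (l₁ ++ (a, b+2) :: l₂))
      = trSL y * trSL (w x y (l₁ ++ (a, b+1) :: l₂))
        - trSL (w x y (l₁ ++ (a, b) :: l₂)) := by
  simp only [w_append, w_cons]
  simp only [trSL, Matrix.SpecialLinearGroup.coe_mul]
  rw [Matrix.SpecialLinearGroup.coe_pow y (b+2), ← Matrix.SpecialLinearGroup.coe_pow y, sl2_pow_add_two]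
  simp [sub_mul, mul_sub, Matrix.smul_mul, Matrix.mul_smul, Matrix.trace_sub, Matrix.trace_smul,
    Matrix.SpecialLinearGroup.coe_pow, smul_eq_mul, trSL_def]



variable {F : Type} [Field F]

open MvPolynomial

lemma pair_eq (i j i' j' : ℕ) :
    (Finsupp.single (0 : Fin 2) i + Finsupp.single 1 j
      = Finsupp.single (0 : Fin 2) i' + Finsupp.single 1 j') ↔ i = i' ∧ j = j' := by
  constructor
  · intro h
    constructor
    · have := DFunLike.congr_fun h 0
      simpa [Finsupp.single_apply] using this
    · have := DFunLike.congr_fun h 1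
      simpa [Finsupp.single_apply] using this
  · rintro ⟨rfl, rfl⟩; rfl

lemma coeff2_sub (p q : MvPolynomial (Fin 2) F) (i j : ℕ) :
    coeff2 (p - q) i j = coeff2 p i j - coeff2 q i j := by
  simp [coeff2]

lemma coeff2_zero (i j : ℕ) : coeff2 (0 : MvPolynomial (Fin 2) F) i j = 0 := by
  simp [coeff2]

lemma coeff2_X0_mul (p : MvPolynomial (Fin 2) F) (i j : ℕ) :
    coeff2 (X 0 * p) (i+1) j = coeff2 p i j := by
  unfold coeff2
  rw [show Finsupp.single (0 : Fin 2) (i+1) + Finsupp.single 1 j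
      = Finsupp.single (0 : Fin 2) 1 + (Finsupp.single (0 : Fin 2) i + Finsupp.single 1 j) by
    rw [Finsupp.single_add 0 i 1]; abel]
  exact MvPolynomial.coeff_X_mul _ 0 p

lemma coeff2_X1_mul (p : MvPolynomial (Fin 2) F) (i j : ℕ) :
    coeff2 (X 1 * p) i (j+1) = coeff2 p i j := by
  unfold coeff2
  rw [show Finsupp.single (0 : Fin 2) i + Finsupp.single 1 (j+1)
      = Finsupp.single (1 : Fin 2) 1 + (Finsupp.single (0 : Fin 2) i + Finsupp.single 1 j) by
    rw [Finsupp.single_add 1 j 1]; abel]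
  exact MvPolynomial.coeff_X_mul _ 1 p

lemma coeff2_X0_mul_zero (p : MvPolynomial (Fin 2) F) (j : ℕ) :
    coeff2 (X 0 * p) 0 j = 0 := by
  unfold coeff2
  rw [mul_comm, MvPolynomial.coeff_mul_X']
  simp [Finsupp.single_apply]

lemma coeff2_X1_mul_zero (p : MvPolynomial (Fin 2) F) (i : ℕ) :
    coeff2 (X 1 * p) i 0 = 0 := by
  unfold coeff2
  rw [mul_comm, MvPolynomial.coeff_mul_X']
  simp [Finsupp.single_apply]

lemma coeff2_X0_cases {p : MvPolynomial (Fin 2) F} {i j : ℕ} (h : coeff2 (X 0 * p) i j ≠ 0) :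
    ∃ i', i = i' + 1 ∧ coeff2 p i' j ≠ 0 := by
  match i with
  | 0 => exact absurd (coeff2_X0_mul_zero p j) h
  | (i'+1) => exact ⟨i', rfl, by rwa [coeff2_X0_mul] at h⟩

lemma coeff2_X1_cases {p : MvPolynomial (Fin 2) F} {i j : ℕ} (h : coeff2 (X 1 * p) i j ≠ 0) :
    ∃ j', j = j' + 1 ∧ coeff2 p i j' ≠ 0 := by
  match j with
  | 0 => exact absurd (coeff2_X1_mul_zero p i) h
  | (j'+1) => exact ⟨j', rfl, by rwa [coeff2_X1_mul] at h⟩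

lemma coeff2_C (a : F) (i j : ℕ) :
    coeff2 (MvPolynomial.C a : MvPolynomial (Fin 2) F) i j = if i = 0 ∧ j = 0 then a else 0 := by
  unfold coeff2
  rw [MvPolynomial.coeff_C]
  congr 1
  rw [show (0 : Fin 2 →₀ ℕ) = Finsupp.single (0 : Fin 2) 0 + Finsupp.single 1 0 by simp]
  rw [show ((Finsupp.single (0:Fin 2) 0 + Finsupp.single 1 0 = Finsupp.single (0:Fin 2) i + Finsupp.single 1 j) = (0 = i ∧ 0 = j)) from propext (pair_eq 0 0 i j)]
  simp [eq_comm, and_comm]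

lemma coeff2_C_mul_X1_pow (a : F) (n i j : ℕ) :
    coeff2 (MvPolynomial.C a * X 1 ^ n : MvPolynomial (Fin 2) F) i j
      = if i = 0 ∧ j = n then a else 0 := by
  unfold coeff2
  rw [MvPolynomial.X_pow_eq_monomial, MvPolynomial.C_mul_monomial, mul_one,
    MvPolynomial.coeff_monomial]
  congr 1
  rw [show (Finsupp.single (1 : Fin 2) n) = Finsupp.single (0 : Fin 2) 0 + Finsupp.single 1 n by simp]
  rw [show ((Finsupp.single (0:Fin 2) 0 + Finsupp.single 1 n = Finsupp.single (0:Fin 2) i + Finsupp.single 1 j) = (0 = i ∧ n = j)) from propext (pair_eq 0 n i j)]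
  simp [eq_comm]

lemma coeff2_C_mul_X0_pow (a : F) (n i j : ℕ) :
    coeff2 (MvPolynomial.C a * X 0 ^ n : MvPolynomial (Fin 2) F) i j
      = if i = n ∧ j = 0 then a else 0 := by
  unfold coeff2
  rw [MvPolynomial.X_pow_eq_monomial, MvPolynomial.C_mul_monomial, mul_one,
    MvPolynomial.coeff_monomial]
  congr 1
  rw [show (Finsupp.single (0 : Fin 2) n) = Finsupp.single (0 : Fin 2) n + Finsupp.single 1 0 by simp]
  rw [show ((Finsupp.single (0:Fin 2) n + Finsupp.single 1 0 = Finsupp.single (0:Fin 2) i + Finsupp.single 1 j) = (n = i ∧ 0 = j)) from propext (pair_eq n 0 i j)]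
  simp [eq_comm]

variable {F : Type} [Field F]
open MvPolynomial

def GoodP (k A B : ℕ) (P : ℕ → MvPolynomial (Fin 2) F) : Prop :=
  coeff2 (P k) (A-k) (B-k) = 1 ∧
  (∀ i j, coeff2 (P k) i j ≠ 0 →
      (i = A-k ∧ j = B-k) ∨ (i ≤ A-k ∧ j ≤ B-k ∧ (i:ℤ)+j < (A:ℤ)+B-2*k)) ∧
  (∀ r, r < k → ∀ i j, coeff2 (P r) i j ≠ 0 → i ≤ A ∧ j ≤ B ∧ (i:ℤ)+j ≤ (A:ℤ)+B-2*k) ∧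
  (∀ r, k < r → P r = 0)

def SubP (k A B : ℕ) (Q : ℕ → MvPolynomial (Fin 2) F) : Prop :=
  (∀ i j, coeff2 (Q k) i j ≠ 0 → i ≤ A-k ∧ j ≤ B-k ∧ (i:ℤ)+j < (A:ℤ)+B-2*k) ∧
  (∀ r, r < k → ∀ i j, coeff2 (Q r) i j ≠ 0 → i ≤ A ∧ j ≤ B ∧ (i:ℤ)+j ≤ (A:ℤ)+B-2*k) ∧
  (∀ r, k < r → Q r = 0)

lemma sub_ne_cases {p q : MvPolynomial (Fin 2) F} {i j : ℕ} (h : coeff2 (p - q) i j ≠ 0) :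
    coeff2 p i j ≠ 0 ∨ coeff2 q i j ≠ 0 := by
  by_contra hc
  push_neg at hc
  rw [coeff2_sub, hc.1, hc.2, sub_zero] at h
  exact h rfl

lemma step_a {k A B : ℕ} {P Q : ℕ → MvPolynomial (Fin 2) F}
    (hA : k ≤ A) (hB : k ≤ B) (hP : GoodP k A B P) (hQ : SubP k (A+1) B Q) :
    GoodP k (A+1) B (fun r => X 0 * P r - Q r) := by
  obtain ⟨h1, h2, h3, h4⟩ := hP
  obtain ⟨g1, g2, g3⟩ := hQ
  refine ⟨?_, ?_, ?_, ?_⟩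
  · have hAk : A+1-k = (A-k)+1 := by omega
    have hq0 : coeff2 (Q k) (A+1-k) (B-k) = 0 := by
      by_contra hne
      obtain ⟨hi, hj, hlt⟩ := g1 _ _ hne
      omega
    rw [coeff2_sub, hq0, sub_zero, hAk, coeff2_X0_mul, h1]
  · intro i j hne
    rcases sub_ne_cases hne with hx | hq
    · obtain ⟨i', rfl, h'⟩ := coeff2_X0_cases hx
      rcases h2 _ _ h' with ⟨hi, hj⟩ | ⟨hi, hj, hlt⟩
      · left; constructor <;> omega
      · right; refine ⟨by omega, by omega, by omega⟩
    · obtain ⟨hi, hj, hlt⟩ := g1 _ _ hq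
      right; exact ⟨hi, hj, hlt⟩
  · intro r hr i j hne
    rcases sub_ne_cases hne with hx | hq
    · obtain ⟨i', rfl, h'⟩ := coeff2_X0_cases hx
      obtain ⟨hi, hj, hlt⟩ := h3 r hr _ _ h'
      exact ⟨by omega, by omega, by omega⟩
    · exact g2 r hr _ _ hq
  · intro r hr
    simp [h4 r hr, g3 r hr]

lemma step_b {k A B : ℕ} {P Q : ℕ → MvPolynomial (Fin 2) F}
    (hA : k ≤ A) (hB : k ≤ B) (hP : GoodP k A B P) (hQ : SubP k A (B+1) Q) :
    GoodP k A (B+1) (fun r => X 1 * P r - Q r) := by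
  obtain ⟨h1, h2, h3, h4⟩ := hP
  obtain ⟨g1, g2, g3⟩ := hQ
  refine ⟨?_, ?_, ?_, ?_⟩
  · have hBk : B+1-k = (B-k)+1 := by omega
    have hq0 : coeff2 (Q k) (A-k) (B+1-k) = 0 := by
      by_contra hne
      obtain ⟨hi, hj, hlt⟩ := g1 _ _ hne
      omega
    rw [coeff2_sub, hq0, sub_zero, hBk, coeff2_X1_mul, h1]
  · intro i j hne
    rcases sub_ne_cases hne with hx | hq
    · obtain ⟨j', rfl, h'⟩ := coeff2_X1_cases hx
      rcases h2 _ _ h' with ⟨hi, hj⟩ | ⟨hi, hj, hlt⟩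
      · left; constructor <;> omega
      · right; refine ⟨by omega, by omega, by omega⟩
    · obtain ⟨hi, hj, hlt⟩ := g1 _ _ hq
      right; exact ⟨hi, hj, hlt⟩
  · intro r hr i j hne
    rcases sub_ne_cases hne with hx | hq
    · obtain ⟨j', rfl, h'⟩ := coeff2_X1_cases hx
      obtain ⟨hi, hj, hlt⟩ := h3 r hr _ _ h'
      exact ⟨by omega, by omega, by omega⟩
    · exact g2 r hr _ _ hq
  · intro r hr
    simp [h4 r hr, g3 r hr]

lemma sub_same_a {k A B : ℕ} {Q : ℕ → MvPolynomial (Fin 2) F}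
    (hA : k ≤ A) (hB : k ≤ B) (h : GoodP k A B Q) : SubP k (A+2) B Q := by
  obtain ⟨h1, h2, h3, h4⟩ := h
  refine ⟨?_, ?_, h4⟩
  · intro i j hne
    rcases h2 _ _ hne with ⟨hi, hj⟩ | ⟨hi, hj, hlt⟩ <;> refine ⟨by omega, by omega, by omega⟩
  · intro r hr i j hne
    obtain ⟨hi, hj, hlt⟩ := h3 r hr _ _ hne
    exact ⟨by omega, by omega, by omega⟩

lemma sub_same_b {k A B : ℕ} {Q : ℕ → MvPolynomial (Fin 2) F}
    (hA : k ≤ A) (hB : k ≤ B) (h : GoodP k A B Q) : SubP k A (B+2) Q := by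
  obtain ⟨h1, h2, h3, h4⟩ := h
  refine ⟨?_, ?_, h4⟩
  · intro i j hne
    rcases h2 _ _ hne with ⟨hi, hj⟩ | ⟨hi, hj, hlt⟩ <;> refine ⟨by omega, by omega, by omega⟩
  · intro r hr i j hne
    obtain ⟨hi, hj, hlt⟩ := h3 r hr _ _ hne
    exact ⟨by omega, by omega, by omega⟩

lemma sub_merge_a {k A B : ℕ} {Q : ℕ → MvPolynomial (Fin 2) F}
    (hA : k ≤ A) (hB : k ≤ B) (h : GoodP k A B Q) : SubP (k+1) (A+2) B Q := by
  obtain ⟨h1, h2, h3, h4⟩ := h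
  refine ⟨?_, ?_, ?_⟩
  · intro i j hne
    rw [h4 (k+1) (by omega), coeff2_zero] at hne
    exact absurd rfl hne
  · intro r hr i j hne
    rcases Nat.lt_or_ge r k with hlt | hge
    · obtain ⟨hi, hj, hs⟩ := h3 r hlt _ _ hne
      exact ⟨by omega, by omega, by omega⟩
    · have hrk : r = k := by omega
      subst hrk
      rcases h2 _ _ hne with ⟨hi, hj⟩ | ⟨hi, hj, hs⟩ <;> exact ⟨by omega, by omega, by omega⟩
  · intro r hr
    exact h4 r (by omega)

lemma sub_merge_b {k A B : ℕ} {Q : ℕ → MvPolynomial (Fin 2) F}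
    (hA : k ≤ A) (hB : k ≤ B) (h : GoodP k A B Q) : SubP (k+1) A (B+2) Q := by
  obtain ⟨h1, h2, h3, h4⟩ := h
  refine ⟨?_, ?_, ?_⟩
  · intro i j hne
    rw [h4 (k+1) (by omega), coeff2_zero] at hne
    exact absurd rfl hne
  · intro r hr i j hne
    rcases Nat.lt_or_ge r k with hlt | hge
    · obtain ⟨hi, hj, hs⟩ := h3 r hlt _ _ hne
      exact ⟨by omega, by omega, by omega⟩
    · have hrk : r = k := by omega
      subst hrk
      rcases h2 _ _ hne with ⟨hi, hj⟩ | ⟨hi, hj, hs⟩ <;> exact ⟨by omega, by omega, by omega⟩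
  · intro r hr
    exact h4 r (by omega)

/-- `Q` encoding the polynomial `c B` in the variable `t` -/
noncomputable def Qt (F : Type) [Field F] (B : ℕ) : ℕ → MvPolynomial (Fin 2) F := fun r =>
  if r = 0 then ∑ j ∈ Finset.range (B+1), MvPolynomial.C ((c F B).coeff j) * X 1 ^ j else 0

noncomputable def Qs (F : Type) [Field F] (A : ℕ) : ℕ → MvPolynomial (Fin 2) F := fun r =>
  if r = 0 then ∑ j ∈ Finset.range (A+1), MvPolynomial.C ((c F A).coeff j) * X 0 ^ j else 0

lemma sub_pure_t (B : ℕ) (hB : 1 ≤ B) : SubP 1 2 B (Qt F B) := by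
  refine ⟨?_, ?_, ?_⟩
  · intro i j hne
    simp only [Qt] at hne
    norm_num at hne
    exact absurd (coeff2_zero i j) hne
  · intro r hr i j hne
    have hr0 : r = 0 := by omega
    subst hr0
    rw [show Qt F B 0 = ∑ j' ∈ Finset.range (B+1), MvPolynomial.C ((c F B).coeff j') * X 1 ^ j' from if_pos rfl] at hne
    have : coeff2 (∑ j' ∈ Finset.range (B+1), MvPolynomial.C ((c F B).coeff j') * X 1 ^ j') i j
        = ∑ j' ∈ Finset.range (B+1), coeff2 (MvPolynomial.C ((c F B).coeff j') * X 1 ^ j') i j := by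
      simp [coeff2, MvPolynomial.coeff_sum]
    rw [this] at hne
    obtain ⟨j', hj', hne'⟩ := Finset.exists_ne_zero_of_sum_ne_zero hne
    rw [coeff2_C_mul_X1_pow] at hne'
    by_cases hc : i = 0 ∧ j = j'
    · obtain ⟨rfl, rfl⟩ := hc
      simp only [Finset.mem_range] at hj'
      exact ⟨by omega, by omega, by omega⟩
    · rw [if_neg hc] at hne'; exact absurd rfl hne'
  · intro r hr
    simp only [Qt]
    rw [if_neg (by omega)]

lemma sub_pure_s (A : ℕ) (hA : 1 ≤ A) : SubP 1 A 2 (Qs F A) := by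
  refine ⟨?_, ?_, ?_⟩
  · intro i j hne
    simp only [Qs] at hne
    norm_num at hne
    exact absurd (coeff2_zero i j) hne
  · intro r hr i j hne
    have hr0 : r = 0 := by omega
    subst hr0
    rw [show Qs F A 0 = ∑ j' ∈ Finset.range (A+1), MvPolynomial.C ((c F A).coeff j') * X 0 ^ j' from if_pos rfl] at hne
    have : coeff2 (∑ j' ∈ Finset.range (A+1), MvPolynomial.C ((c F A).coeff j') * X 0 ^ j') i j
        = ∑ j' ∈ Finset.range (A+1), coeff2 (MvPolynomial.C ((c F A).coeff j') * X 0 ^ j') i j := by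
      simp [coeff2, MvPolynomial.coeff_sum]
    rw [this] at hne
    obtain ⟨j', hj', hne'⟩ := Finset.exists_ne_zero_of_sum_ne_zero hne
    rw [coeff2_C_mul_X0_pow] at hne'
    by_cases hc : i = j' ∧ j = 0
    · obtain ⟨rfl, rfl⟩ := hc
      simp only [Finset.mem_range] at hj'
      exact ⟨by omega, by omega, by omega⟩
    · rw [if_neg hc] at hne'; exact absurd rfl hne'
  · intro r hr
    simp only [Qs]
    rw [if_neg (by omega)]

noncomputable def Pbase (F : Type) [Field F] (k : ℕ) : ℕ → MvPolynomial (Fin 2) F := fun r =>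
  if r ≤ k then MvPolynomial.C ((c F k).coeff r) else 0

lemma good_base (k : ℕ) (hk : 1 ≤ k) : GoodP k k k (Pbase F k) := by
  refine ⟨?_, ?_, ?_, ?_⟩
  · simp only [Pbase, if_pos le_rfl]
    rw [c_coeff_top k hk]
    rw [coeff2_C]
    simp [Nat.sub_self]
  · intro i j hne
    simp only [Pbase, if_pos le_rfl, coeff2_C] at hne
    by_cases hc : i = 0 ∧ j = 0
    · left; omega
    · rw [if_neg hc] at hne; exact absurd rfl hne
  · intro r hr i j hne
    simp only [Pbase, if_pos (le_of_lt hr), coeff2_C] at hne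
    by_cases hc : i = 0 ∧ j = 0
    · exact ⟨by omega, by omega, by omega⟩
    · rw [if_neg hc] at hne; exact absurd rfl hne
  · intro r hr
    simp only [Pbase]
    rw [if_neg (by omega)]


/-- abbreviation for the target sum -/
noncomputable def SumU (x y : SL2 F) (k : ℕ) (P : ℕ → MvPolynomial (Fin 2) F) : F :=
  ∑ r ∈ Finset.range (k+1), trSL (x*y) ^ r * MvPolynomial.eval ![trSL x, trSL y] (P r)

lemma SumU_extend (x y : SL2 F) {k k' : ℕ} {P : ℕ → MvPolynomial (Fin 2) F}
    (h : k' ≤ k) (hv : ∀ r, k' < r → P r = 0) :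
    SumU x y k P = SumU x y k' P := by
  unfold SumU
  refine (Finset.sum_subset (by intro r hr; simp at hr ⊢; omega) ?_).symm
  intro r hr hr'
  simp only [Finset.mem_range] at hr hr'
  rw [hv r (by omega)]
  simp

lemma SumU_combine_a (x y : SL2 F) (k : ℕ) (P Q : ℕ → MvPolynomial (Fin 2) F) :
    trSL x * SumU x y k P - SumU x y k Q
      = SumU x y k (fun r => MvPolynomial.X 0 * P r - Q r) := by
  unfold SumU
  rw [Finset.mul_sum, ← Finset.sum_sub_distrib]
  refine Finset.sum_congr rfl fun r _ => ?_
  simp only [map_sub, MvPolynomial.eval_mul, MvPolynomial.eval_X]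
  simp [Matrix.cons_val_zero]
  ring

lemma SumU_combine_b (x y : SL2 F) (k : ℕ) (P Q : ℕ → MvPolynomial (Fin 2) F) :
    trSL y * SumU x y k P - SumU x y k Q
      = SumU x y k (fun r => MvPolynomial.X 1 * P r - Q r) := by
  unfold SumU
  rw [Finset.mul_sum, ← Finset.sum_sub_distrib]
  refine Finset.sum_congr rfl fun r _ => ?_
  simp only [map_sub, MvPolynomial.eval_mul, MvPolynomial.eval_X]
  simp [Matrix.cons_val_one]
  ring

lemma w_zero_a_mid (x y : SL2 F) (l₁ l₂ : List (ℕ × ℕ)) (q : ℕ × ℕ) (b : ℕ) :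
    w x y (l₁ ++ q :: (0, b) :: l₂) = w x y (l₁ ++ (q.1, q.2 + b) :: l₂) := by
  simp [w_append, w_cons, pow_add, pow_zero, one_mul, mul_assoc]

lemma w_zero_b_mid (x y : SL2 F) (l₁ l₂ : List (ℕ × ℕ)) (a : ℕ) (q : ℕ × ℕ) :
    w x y (l₁ ++ (a, 0) :: q :: l₂) = w x y (l₁ ++ (a + q.1, q.2) :: l₂) := by
  simp [w_append, w_cons, pow_add, pow_zero, one_mul, mul_assoc]

lemma tr_zero_a_head (x y : SL2 F) (l₂' : List (ℕ × ℕ)) (q : ℕ × ℕ) (b : ℕ) :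
    trSL (w x y ((0, b) :: (l₂' ++ [q]))) = trSL (w x y (l₂' ++ [(q.1, q.2 + b)])) := by
  rw [w_cons]
  rw [trSL_mul_comm]
  congr 1
  simp [w_append, w_cons, pow_add, pow_zero, one_mul, mul_assoc, w]

lemma tr_zero_b_last (x y : SL2 F) (l₁' : List (ℕ × ℕ)) (q : ℕ × ℕ) (a : ℕ) :
    trSL (w x y ((q :: l₁') ++ [(a, 0)])) = trSL (w x y ((q.1 + a, q.2) :: l₁')) := by
  have h1 : w x y ((q :: l₁') ++ [(a,0)]) = w x y (q :: l₁') * x ^ a := by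
    simp [w_append, w_cons, w, mul_assoc]
  rw [h1, trSL_mul_comm]
  congr 1
  rw [w_cons, w_cons, pow_add]
  group

lemma base_id (x y : SL2 F) (k : ℕ) :
    trSL ((x * y) ^ k) = SumU x y k (Pbase F k) := by
  rw [trSL_pow]
  rw [Polynomial.eval_eq_sum_range' (lt_of_le_of_lt (c_natDegree_le k) (Nat.lt_succ_self k))]
  unfold SumU
  refine Finset.sum_congr rfl fun r hr => ?_
  simp only [Finset.mem_range] at hr
  rw [show Pbase F k r = MvPolynomial.C ((c F k).coeff r) from if_pos (by omega)]
  rw [MvPolynomial.eval_C]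
  ring

lemma Qt_id (x y : SL2 F) (B : ℕ) :
    SumU x y 1 (Qt F B) = (c F B).eval (trSL y) := by
  unfold SumU
  rw [Finset.sum_range_succ, Finset.sum_range_one]
  rw [show Qt F B 1 = 0 by simp [Qt]]
  rw [show Qt F B 0 = ∑ j ∈ Finset.range (B+1), MvPolynomial.C ((c F B).coeff j) * MvPolynomial.X 1 ^ j from if_pos rfl]
  rw [Polynomial.eval_eq_sum_range' (lt_of_le_of_lt (c_natDegree_le B) (Nat.lt_succ_self B))]
  simp [MvPolynomial.eval_sum]

lemma Qs_id (x y : SL2 F) (A : ℕ) :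
    SumU x y 1 (Qs F A) = (c F A).eval (trSL x) := by
  unfold SumU
  rw [Finset.sum_range_succ, Finset.sum_range_one]
  rw [show Qs F A 1 = 0 by simp [Qs]]
  rw [show Qs F A 0 = ∑ j ∈ Finset.range (A+1), MvPolynomial.C ((c F A).coeff j) * MvPolynomial.X 0 ^ j from if_pos rfl]
  rw [Polynomial.eval_eq_sum_range' (lt_of_le_of_lt (c_natDegree_le A) (Nat.lt_succ_self A))]
  simp [MvPolynomial.eval_sum]

def sA (l : List (ℕ × ℕ)) : ℕ := (l.map Prod.fst).sum
def sB (l : List (ℕ × ℕ)) : ℕ := (l.map Prod.snd).sum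

@[simp] lemma sA_nil : sA ([] : List (ℕ × ℕ)) = 0 := rfl
@[simp] lemma sB_nil : sB ([] : List (ℕ × ℕ)) = 0 := rfl
@[simp] lemma sA_cons (p : ℕ × ℕ) (l : List (ℕ × ℕ)) : sA (p :: l) = p.1 + sA l := by
  simp [sA]
@[simp] lemma sB_cons (p : ℕ × ℕ) (l : List (ℕ × ℕ)) : sB (p :: l) = p.2 + sB l := by
  simp [sB]
@[simp] lemma sA_append (l₁ l₂ : List (ℕ × ℕ)) : sA (l₁ ++ l₂) = sA l₁ + sA l₂ := by
  simp [sA]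
@[simp] lemma sB_append (l₁ l₂ : List (ℕ × ℕ)) : sB (l₁ ++ l₂) = sB l₁ + sB l₂ := by
  simp [sB]

lemma sA_replicate (n : ℕ) (p : ℕ × ℕ) : sA (List.replicate n p) = n * p.1 := by
  induction n with
  | zero => simp
  | succ n ihn => rw [List.replicate_succ, sA_cons, ihn]; ring

lemma sB_replicate (n : ℕ) (p : ℕ × ℕ) : sB (List.replicate n p) = n * p.2 := by
  induction n with
  | zero => simp
  | succ n ihn => rw [List.replicate_succ, sB_cons, ihn]; ring

lemma len_le_sA (l : List (ℕ × ℕ)) (h : ∀ p ∈ l, 1 ≤ p.1) : l.length ≤ sA l := by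
  induction l with
  | nil => simp
  | cons p l ihl =>
    have h1 := h p (by simp)
    have h2 := ihl (fun q hq => h q (by simp [hq]))
    simp only [sA_cons, List.length_cons]
    omega

lemma len_le_sB (l : List (ℕ × ℕ)) (h : ∀ p ∈ l, 1 ≤ p.2) : l.length ≤ sB l := by
  induction l with
  | nil => simp
  | cons p l ihl =>
    have h1 := h p (by simp)
    have h2 := ihl (fun q hq => h q (by simp [hq]))
    simp only [sB_cons, List.length_cons]
    omega

theorem main (N : ℕ) : ∀ (l : List (ℕ × ℕ)) (k A B : ℕ), l.length = k → sA l = A →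
    sB l = B → A + B ≤ N → l ≠ [] →
    (∀ p ∈ l, 1 ≤ p.1 ∧ 1 ≤ p.2) →
    ∃ P : ℕ → MvPolynomial (Fin 2) F,
      (∀ x y : SL2 F, trSL (w x y l) = SumU x y k P) ∧
      GoodP k A B P := by
  induction N with
  | zero =>
    intro l k A B hk hA hB hs hne hpos
    exfalso
    match l with
    | [] => exact hne rfl
    | p :: l' =>
      have h1 := (hpos p (by simp)).1
      simp only [sA_cons] at hA
      omega
  | succ N ih =>
    intro l k A B hk hA hB hs hne hpos
    by_cases hall : ∀ p ∈ l, p = (1, 1)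
    · -- all blocks are (1,1) : base case
      subst hk hA hB
      have hk1 : 1 ≤ l.length := List.length_pos_iff.mpr hne
      have hrep : l = List.replicate l.length ((1, 1) : ℕ × ℕ) :=
        List.eq_replicate_of_mem hall
      have hA : sA l = l.length := by
        conv_lhs => rw [hrep]
        rw [sA_replicate]; simp
      have hB : sB l = l.length := by
        conv_lhs => rw [hrep]
        rw [sB_replicate]; simp
      refine ⟨Pbase F l.length, ?_, ?_⟩
      · intro x y
        have hw : w x y l = (x * y) ^ l.length := by
          conv_lhs => rw [hrep]
          rw [w, List.map_replicate, List.prod_replicate]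
          simp
        rw [hw, base_id]
      · rw [hA, hB]
        exact good_base _ hk1
    · -- some block is not (1,1)
      push_neg at hall
      obtain ⟨p, hpl, hp1⟩ := hall
      have hp := hpos p hpl
      obtain ⟨l₁, l₂, rfl⟩ := List.append_of_mem hpl
      obtain ⟨pa, pb⟩ := p
      simp only at hp
      -- numeric bookkeeping
      have hkv : l₁.length + 1 + l₂.length = k := by simp at hk; omega
      have hAv : sA l₁ + pa + sA l₂ = A := by simp at hA; omega
      have hBv : sB l₁ + pb + sB l₂ = B := by simp at hB; omega
      have hsv : A + B ≤ N + 1 := hs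
      have hposl₁ : ∀ q ∈ l₁, 1 ≤ q.1 ∧ 1 ≤ q.2 := fun q hq => hpos q (by simp [hq])
      have hposl₂ : ∀ q ∈ l₂, 1 ≤ q.1 ∧ 1 ≤ q.2 := fun q hq => hpos q (by simp [hq])
      rcases Nat.lt_or_ge pa 2 with hpa2 | hpa2
      -- ============ CASE β : 2 ≤ pb ============
      · have hpb2 : 2 ≤ pb := by
          rcases Nat.lt_or_ge pb 2 with h | h
          · exfalso; apply hp1
            have h1 : pa = 1 := by omega
            have h2 : pb = 1 := by omega
            rw [h1, h2]
          · exact h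
        -- the word with pb decreased by one
        have hpos' : ∀ q ∈ l₁ ++ (pa, pb - 1) :: l₂, 1 ≤ q.1 ∧ 1 ≤ q.2 := by
          intro q hq; simp only [List.mem_append, List.mem_cons] at hq
          rcases hq with h | h | h
          · exact hposl₁ q h
          · subst h; exact ⟨hp.1, by omega⟩
          · exact hposl₂ q h
        obtain ⟨P', hid', hg'⟩ := ih (l₁ ++ (pa, pb - 1) :: l₂) k A (B - 1)
          (by simp; omega) (by simp; omega) (by simp; omega) (by omega) (by simp) hpos'
        have hkA : k ≤ A := by
          have := len_le_sA (l₁ ++ (pa, pb - 1) :: l₂) (fun q hq => (hpos' q hq).1)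
          simp at this; omega
        have hkB1 : k ≤ B - 1 := by
          have := len_le_sB (l₁ ++ (pa, pb - 1) :: l₂) (fun q hq => (hpos' q hq).2)
          simp at this; omega
        -- construct Q for the doubly-reduced word
        have hQ : ∃ Q : ℕ → MvPolynomial (Fin 2) F,
            (∀ x y : SL2 F, trSL (w x y (l₁ ++ (pa, pb - 2) :: l₂)) = SumU x y k Q) ∧
            SubP k A B Q := by
          rcases Nat.lt_or_ge pb 3 with hpb3 | hpb3
          · -- pb = 2 : merge cases
            rw [show pb - 2 = 0 by omega]
            rcases l₂ with _ | ⟨q, l₂'⟩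
            · rcases l₁ with _ | ⟨q, l₁'⟩
              · -- l = [(pa, 2)] : pure power of x remains
                obtain rfl : k = 1 := by simp at hkv; omega
                rw [show A = pa by simp at hAv; omega, show B = 2 by simp at hBv; omega]
                refine ⟨Qs F pa, ?_, ?_⟩
                · intro x y
                  have hw : w x y ([] ++ [(pa, 0)]) = x ^ pa := by simp [w]
                  rw [hw, trSL_pow, Qs_id]
                · exact sub_pure_s pa hp.1
              · -- l₁ = q :: l₁' , l₂ = [] : merge into the first block
                have hq1 := hposl₁ q (by simp)
                have hposm : ∀ q' ∈ (q.1 + pa, q.2) :: l₁', 1 ≤ q'.1 ∧ 1 ≤ q'.2 := by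
                  intro q' hq'; simp only [List.mem_cons] at hq'
                  rcases hq' with h | h
                  · subst h; exact ⟨by omega, hq1.2⟩
                  · exact hposl₁ q' (by simp [h])
                obtain ⟨P'', hid'', hg''⟩ := ih ((q.1 + pa, q.2) :: l₁') (k-1) A (B-2)
                  (by simp at hkv ⊢; omega) (by simp at hAv ⊢; omega)
                  (by simp at hBv ⊢; omega) (by omega) (by simp) hposm
                refine ⟨P'', ?_, ?_⟩
                · intro x y
                  rw [tr_zero_b_last x y l₁' q pa, hid'' x y]
                  exact (SumU_extend x y (by omega) hg''.2.2.2).symm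
                · have hsub := sub_merge_b
                    (by have := len_le_sA ((q.1 + pa, q.2) :: l₁') (fun q' hq' => (hposm q' hq').1)
                        simp at this hAv hkv ⊢; omega)
                    (by have := len_le_sB ((q.1 + pa, q.2) :: l₁') (fun q' hq' => (hposm q' hq').2)
                        simp at this hBv hkv ⊢; omega)
                    hg''
                  rw [show k - 1 + 1 = k by simp at hkv; omega,
                    show B - 2 + 2 = B by omega] at hsub
                  exact hsub
            · -- l₂ = q :: l₂' : merge to the right
              have hq1 := hposl₂ q (by simp)
              have hposm : ∀ q' ∈ l₁ ++ (pa + q.1, q.2) :: l₂', 1 ≤ q'.1 ∧ 1 ≤ q'.2 := by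
                intro q' hq'; simp only [List.mem_append, List.mem_cons] at hq'
                rcases hq' with h | h | h
                · exact hposl₁ q' h
                · subst h; exact ⟨by omega, hq1.2⟩
                · exact hposl₂ q' (by simp [h])
              obtain ⟨P'', hid'', hg''⟩ := ih (l₁ ++ (pa + q.1, q.2) :: l₂') (k-1) A (B-2)
                (by simp at hkv ⊢; omega) (by simp at hAv ⊢; omega)
                (by simp at hBv ⊢; omega) (by omega) (by simp) hposm
              refine ⟨P'', ?_, ?_⟩
              · intro x y
                rw [w_zero_b_mid x y l₁ l₂' pa q, hid'' x y]
                exact (SumU_extend x y (by omega) hg''.2.2.2).symm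
              · have hsub := sub_merge_b
                  (by have := len_le_sA (l₁ ++ (pa + q.1, q.2) :: l₂') (fun q' hq' => (hposm q' hq').1)
                      simp at this hAv hkv ⊢; omega)
                  (by have := len_le_sB (l₁ ++ (pa + q.1, q.2) :: l₂') (fun q' hq' => (hposm q' hq').2)
                      simp at this hBv hkv ⊢; omega)
                  hg''
                rw [show k - 1 + 1 = k by simp at hkv; omega,
                  show B - 2 + 2 = B by omega] at hsub
                exact hsub
          · -- pb ≥ 3 : plain reduction
            have hpos'' : ∀ q ∈ l₁ ++ (pa, pb - 2) :: l₂, 1 ≤ q.1 ∧ 1 ≤ q.2 := by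
              intro q hq; simp only [List.mem_append, List.mem_cons] at hq
              rcases hq with h | h | h
              · exact hposl₁ q h
              · subst h; exact ⟨hp.1, by omega⟩
              · exact hposl₂ q h
            obtain ⟨P'', hid'', hg''⟩ := ih (l₁ ++ (pa, pb - 2) :: l₂) k A (B - 2)
              (by simp; omega) (by simp; omega) (by simp; omega) (by omega) (by simp) hpos''
            refine ⟨P'', hid'', ?_⟩
            have hsub := sub_same_b hkA
              (by have := len_le_sB (l₁ ++ (pa, pb - 2) :: l₂) (fun q hq => (hpos'' q hq).2)
                  simp at this; omega)
              hg''
            rw [show B - 2 + 2 = B by omega] at hsub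
            exact hsub
        obtain ⟨Q, hidQ, hsubQ⟩ := hQ
        refine ⟨fun r => MvPolynomial.X 1 * P' r - Q r, ?_, ?_⟩
        · intro x y
          have hTB := TB x y l₁ l₂ pa (pb - 2)
          rw [show pb - 2 + 2 = pb by omega, show pb - 2 + 1 = pb - 1 by omega] at hTB
          rw [hTB, hid' x y, hidQ x y, SumU_combine_b]
        · have hstep := step_b hkA hkB1 hg'
            (by rw [show B - 1 + 1 = B by omega]; exact hsubQ)
          rw [show B - 1 + 1 = B by omega] at hstep
          exact hstep
      -- ============ CASE α : 2 ≤ pa ============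
      · -- the word with pa decreased by one
        have hpos' : ∀ q ∈ l₁ ++ (pa - 1, pb) :: l₂, 1 ≤ q.1 ∧ 1 ≤ q.2 := by
          intro q hq; simp only [List.mem_append, List.mem_cons] at hq
          rcases hq with h | h | h
          · exact hposl₁ q h
          · subst h; exact ⟨by omega, hp.2⟩
          · exact hposl₂ q h
        obtain ⟨P', hid', hg'⟩ := ih (l₁ ++ (pa - 1, pb) :: l₂) k (A - 1) B
          (by simp; omega) (by simp; omega) (by simp; omega) (by omega) (by simp) hpos'
        have hkB : k ≤ B := by
          have := len_le_sB (l₁ ++ (pa - 1, pb) :: l₂) (fun q hq => (hpos' q hq).2)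
          simp at this; omega
        have hkA1 : k ≤ A - 1 := by
          have := len_le_sA (l₁ ++ (pa - 1, pb) :: l₂) (fun q hq => (hpos' q hq).1)
          simp at this; omega
        -- construct Q for the doubly-reduced word
        have hQ : ∃ Q : ℕ → MvPolynomial (Fin 2) F,
            (∀ x y : SL2 F, trSL (w x y (l₁ ++ (pa - 2, pb) :: l₂)) = SumU x y k Q) ∧
            SubP k A B Q := by
          rcases Nat.lt_or_ge pa 3 with hpa3 | hpa3
          · -- pa = 2 : merge cases
            rw [show pa - 2 = 0 by omega]
            rcases List.eq_nil_or_concat' l₁ with rfl | ⟨l₁', q, rfl⟩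
            · rcases List.eq_nil_or_concat' l₂ with rfl | ⟨l₂', q, rfl⟩
              · -- l = [(2, pb)] : pure power of y remains
                obtain rfl : k = 1 := by simp at hkv; omega
                rw [show A = 2 by simp at hAv; omega, show B = pb by simp at hBv; omega]
                refine ⟨Qt F pb, ?_, ?_⟩
                · intro x y
                  have hw : w x y ([] ++ [(0, pb)]) = y ^ pb := by simp [w]
                  rw [hw, trSL_pow, Qt_id]
                · exact sub_pure_t pb hp.2
              · -- l₁ = [] , l₂ = l₂' ++ [q] : wrap around to the last block
                have hq1 := hposl₂ q (by simp)
                have hposm : ∀ q' ∈ l₂' ++ [(q.1, q.2 + pb)], 1 ≤ q'.1 ∧ 1 ≤ q'.2 := by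
                  intro q' hq'; simp only [List.mem_append, List.mem_cons] at hq'
                  rcases hq' with h | h
                  · exact hposl₂ q' (by simp [h])
                  · simp at h; subst h; exact ⟨hq1.1, by omega⟩
                obtain ⟨P'', hid'', hg''⟩ := ih (l₂' ++ [(q.1, q.2 + pb)]) (k-1) (A-2) B
                  (by simp at hkv ⊢; omega) (by simp at hAv ⊢; omega)
                  (by simp at hBv ⊢; omega) (by omega) (by simp) hposm
                refine ⟨P'', ?_, ?_⟩
                · intro x y
                  rw [show ([] ++ ((0:ℕ), pb) :: (l₂' ++ [q]) : List (ℕ × ℕ))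
                      = (0, pb) :: (l₂' ++ [q]) from rfl]
                  rw [tr_zero_a_head x y l₂' q pb, hid'' x y]
                  exact (SumU_extend x y (by omega) hg''.2.2.2).symm
                · have hsub := sub_merge_a
                    (by have := len_le_sA (l₂' ++ [(q.1, q.2 + pb)]) (fun q' hq' => (hposm q' hq').1)
                        simp at this hAv hkv ⊢; omega)
                    (by have := len_le_sB (l₂' ++ [(q.1, q.2 + pb)]) (fun q' hq' => (hposm q' hq').2)
                        simp at this hBv hkv ⊢; omega)
                    hg''
                  rw [show k - 1 + 1 = k by simp at hkv; omega,
                    show A - 2 + 2 = A by omega] at hsub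
                  exact hsub
            · -- l₁ = l₁' ++ [q] : merge into the previous block
              have hq1 := hposl₁ q (by simp)
              have hposm : ∀ q' ∈ l₁' ++ (q.1, q.2 + pb) :: l₂, 1 ≤ q'.1 ∧ 1 ≤ q'.2 := by
                intro q' hq'; simp only [List.mem_append, List.mem_cons] at hq'
                rcases hq' with h | h | h
                · exact hposl₁ q' (by simp [h])
                · subst h; exact ⟨hq1.1, by omega⟩
                · exact hposl₂ q' h
              obtain ⟨P'', hid'', hg''⟩ := ih (l₁' ++ (q.1, q.2 + pb) :: l₂) (k-1) (A-2) B
                (by simp at hkv ⊢; omega) (by simp at hAv ⊢; omega)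
                (by simp at hBv ⊢; omega) (by omega) (by simp) hposm
              refine ⟨P'', ?_, ?_⟩
              · intro x y
                rw [show (l₁' ++ [q]) ++ ((0:ℕ), pb) :: l₂ = l₁' ++ q :: (0, pb) :: l₂ by simp]
                rw [w_zero_a_mid x y l₁' l₂ q pb, hid'' x y]
                exact (SumU_extend x y (by omega) hg''.2.2.2).symm
              · have hsub := sub_merge_a
                  (by have := len_le_sA (l₁' ++ (q.1, q.2 + pb) :: l₂) (fun q' hq' => (hposm q' hq').1)
                      simp at this hAv hkv ⊢; omega)
                  (by have := len_le_sB (l₁' ++ (q.1, q.2 + pb) :: l₂) (fun q' hq' => (hposm q' hq').2)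
                      simp at this hBv hkv ⊢; omega)
                  hg''
                rw [show k - 1 + 1 = k by simp at hkv; omega,
                  show A - 2 + 2 = A by omega] at hsub
                exact hsub
          · -- pa ≥ 3 : plain reduction
            have hpos'' : ∀ q ∈ l₁ ++ (pa - 2, pb) :: l₂, 1 ≤ q.1 ∧ 1 ≤ q.2 := by
              intro q hq; simp only [List.mem_append, List.mem_cons] at hq
              rcases hq with h | h | h
              · exact hposl₁ q h
              · subst h; exact ⟨by omega, hp.2⟩
              · exact hposl₂ q h
            obtain ⟨P'', hid'', hg''⟩ := ih (l₁ ++ (pa - 2, pb) :: l₂) k (A - 2) B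
              (by simp; omega) (by simp; omega) (by simp; omega) (by omega) (by simp) hpos''
            refine ⟨P'', hid'', ?_⟩
            have hsub := sub_same_a
              (by have := len_le_sA (l₁ ++ (pa - 2, pb) :: l₂) (fun q hq => (hpos'' q hq).1)
                  simp at this; omega)
              hkB hg''
            rw [show A - 2 + 2 = A by omega] at hsub
            exact hsub
        obtain ⟨Q, hidQ, hsubQ⟩ := hQ
        refine ⟨fun r => MvPolynomial.X 0 * P' r - Q r, ?_, ?_⟩
        · intro x y
          have hTA := TA x y l₁ l₂ (pa - 2) pb
          rw [show pa - 2 + 2 = pa by omega, show pa - 2 + 1 = pa - 1 by omega] at hTA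
          rw [hTA, hid' x y, hidQ x y, SumU_combine_a]
        · have hstep := step_a hkA1 hkB hg'
            (by rw [show A - 1 + 1 = A by omega]; exact hsubQ)
          rw [show A - 1 + 1 = A by omega] at hstep
          exact hstep

end TPW

/-- The trace of a positive word `x^{a₁}y^{b₁} ⋯ x^{a_k}y^{b_k}` is
`∑_{r=0}^{k} u^r p_r(s,t)` with the stated degree bounds, where `s = tr x`,
`u = tr (xy)`, `t = tr y`, `A = ∑ aᵢ`, `B = ∑ bᵢ`. -/
theorem trace_positive_word
    (p e q : ℕ) (hp : p.Prime) (he : 1 ≤ e) (hq : q = p ^ e)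
    (F : Type) [Field F] [Fintype F] (hF : Fintype.card F = q)
    (k : ℕ) (hk : 1 ≤ k) (a b : Fin k → ℕ)
    (ha : ∀ i, 1 ≤ a i) (hb : ∀ i, 1 ≤ b i)
    (A B : ℕ) (hA : A = ∑ i, a i) (hB : B = ∑ i, b i) :
    ∃ P : Fin (k + 1) → MvPolynomial (Fin 2) F,
      (∀ x y : SL2 F,
          trSL (List.ofFn (fun i : Fin k => x ^ a i * y ^ b i)).prod =
            ∑ r : Fin (k + 1),
              trSL (x * y) ^ (r : ℕ) * MvPolynomial.eval ![trSL x, trSL y] (P r)) ∧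
      -- `p_k(s,t) = s^{A-k} t^{B-k} + Φ(s,t)` with the stated degree bounds on `Φ`
      coeff2 (P (Fin.last k)) (A - k) (B - k) = 1 ∧
      (∀ i j : ℕ, coeff2 (P (Fin.last k)) i j ≠ 0 →
          (i, j) = (A - k, B - k) ∨
            (i ≤ A - k ∧ j ≤ B - k ∧ (i : ℤ) + j < (A : ℤ) + B - 2 * k)) ∧
      -- for `r < k`: `deg_s p_r ≤ A`, `deg_t p_r ≤ B`, `deg p_r ≤ A + B - 2k`
      (∀ r : Fin (k + 1), (r : ℕ) < k →
          ∀ i j : ℕ, coeff2 (P r) i j ≠ 0 →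
            i ≤ A ∧ j ≤ B ∧ (i : ℤ) + j ≤ (A : ℤ) + B - 2 * k) := by
  classical
  set l : List (ℕ × ℕ) := List.ofFn (fun i => (a i, b i)) with hl
  have hlen : l.length = k := by simp [hl]
  have hsA : TPW.sA l = A := by
    rw [hA]
    simp [hl, TPW.sA, List.map_ofFn, List.sum_ofFn, Function.comp]
  have hsB : TPW.sB l = B := by
    rw [hB]
    simp [hl, TPW.sB, List.map_ofFn, List.sum_ofFn, Function.comp]
  have hne : l ≠ [] := by
    intro h
    rw [h] at hlen
    simp at hlen
    omega
  have hpos : ∀ p ∈ l, 1 ≤ p.1 ∧ 1 ≤ p.2 := by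
    intro p hp'
    rw [hl, List.mem_ofFn] at hp'
    obtain ⟨i, rfl⟩ := hp'
    exact ⟨ha i, hb i⟩
  obtain ⟨P0, hid, hgood⟩ := TPW.main (F := F) (TPW.sA l + TPW.sB l) l l.length
    (TPW.sA l) (TPW.sB l) rfl rfl rfl le_rfl hne hpos
  rw [hlen, hsA, hsB] at hgood
  obtain ⟨g1, g2, g3, _⟩ := hgood
  refine ⟨fun r => P0 (r : ℕ), ?_, ?_, ?_, ?_⟩
  · intro x y
    have h1 := hid x y
    have hw : TPW.w x y l = (List.ofFn (fun i : Fin k => x ^ a i * y ^ b i)).prod := by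
      rw [TPW.w, hl, List.map_ofFn]
      rfl
    rw [hw, hlen] at h1
    rw [h1, TPW.SumU]
    exact (Fin.sum_univ_eq_sum_range
      (fun r => trSL (x * y) ^ r * MvPolynomial.eval ![trSL x, trSL y] (P0 r)) (k+1)).symm
  · simpa using g1
  · intro i j hne'
    have := g2 i j (by simpa using hne')
    rcases this with ⟨h1, h2⟩ | ⟨h1, h2, h3⟩
    · left; rw [h1, h2]
    · right; exact ⟨h1, h2, h3⟩
  · intro r hr i j hne'
    exact g3 (r : ℕ) hr i j hne'
end

section
/- Let q be a prime power, let w ∈ F₂ be a non-trivial element of the free group on two generators, and let z ∈ SL(2,q) with z ≠ id and z ≠ -id. If z = w(x,y) for some x, y ∈ SL(2,q), then for every z' ∈ SL(2,q) with z' ≠ id, z' ≠ -id and tr(z') = tr(z), there exist x', y' ∈ SL(2,q) such that z' = w(x',y'). -/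
/-- Evaluation of a word `w` in the free group on two generators at `(x, y)`. -/
def evalWord {G : Type} [Group G] (w : FreeGroup (Fin 2)) (x y : G) : G :=
  FreeGroup.lift ![x, y] w

/-!
A `2 × 2` matrix over a field that is not scalar has a cyclic vector `v`, and in the basis
`v, M v` it becomes the companion matrix `!![0, -det M; 1, tr M]`. So `z` and `z'`, being
non-scalar with equal trace and determinant, are conjugate by some `g ∈ GL₂(F)`. Conjugation
by `g` is an endomorphism of `SL₂(F)`, and it carries `z = w(x, y)` to
`z' = w(g x g⁻¹, g y g⁻¹)`.
-/

open Matrix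

namespace Matrix

section CommRing

variable {R : Type*} [CommRing R]

def cyclicBasis (M : Matrix (Fin 2) (Fin 2) R) (v : Fin 2 → R) : Matrix (Fin 2) (Fin 2) R :=
  (of ![v, M *ᵥ v])ᵀ

/-- Cayley–Hamilton: `M (M v) = tr M • M v - det M • v`. -/
theorem mul_cyclicBasis (M : Matrix (Fin 2) (Fin 2) R) (v : Fin 2 → R) :
    M * cyclicBasis M v = cyclicBasis M v * !![0, -M.det; 1, M.trace] := by
  ext i j
  fin_cases i <;> fin_cases j <;>
    simp [cyclicBasis, mul_apply, Fin.sum_univ_two, det_fin_two, trace_fin_two] <;> ring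

end CommRing

variable {F : Type*} [Field F]

/-- If none of `e₀`, `e₁`, `e₀ + e₁` is a cyclic vector of `M`, then `M` is scalar. -/
theorem exists_det_cyclicBasis_ne_zero (M : Matrix (Fin 2) (Fin 2) F)
    (hM : ∀ r : F, M ≠ scalar (Fin 2) r) : ∃ v, (cyclicBasis M v).det ≠ 0 := by
  by_contra! h
  have det_eq (v : Fin 2 → F) : (cyclicBasis M v).det =
      v 0 * (M 1 0 * v 0 + M 1 1 * v 1) - (M 0 0 * v 0 + M 0 1 * v 1) * v 1 := by
    simp [cyclicBasis, det_fin_two]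
    ring
  have hc : M 1 0 = 0 := by simpa [det_eq] using h ![1, 0]
  have hb : M 0 1 = 0 := by simpa [det_eq] using h ![0, 1]
  have had : M 1 1 - M 0 0 = 0 := by simpa [det_eq, hb, hc] using h ![1, 1]
  refine hM (M 0 0) (ext fun i j => ?_)
  fin_cases i <;> fin_cases j <;> simp [hb, hc, (sub_eq_zero.1 had).symm]

theorem exists_units_mul_eq_mul_companion (M : Matrix (Fin 2) (Fin 2) F)
    (hM : ∀ r : F, M ≠ scalar (Fin 2) r) :
    ∃ P : GL (Fin 2) F, M * P = P * !![0, -M.det; 1, M.trace] := by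
  obtain ⟨v, hv⟩ := exists_det_cyclicBasis_ne_zero M hM
  exact ⟨GeneralLinearGroup.mkOfDetNeZero _ hv, mul_cyclicBasis M v⟩

theorem exists_units_conj_eq_of_trace_eq_of_det_eq {M N : Matrix (Fin 2) (Fin 2) F}
    (hM : ∀ r : F, M ≠ scalar (Fin 2) r) (hN : ∀ r : F, N ≠ scalar (Fin 2) r)
    (htr : M.trace = N.trace) (hdet : M.det = N.det) :
    ∃ g : GL (Fin 2) F, (g : Matrix (Fin 2) (Fin 2) F) * M * g⁻¹ = N := by
  obtain ⟨P, hP⟩ := exists_units_mul_eq_mul_companion M hM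
  obtain ⟨Q, hQ⟩ := exists_units_mul_eq_mul_companion N hN
  rw [htr, hdet] at hP
  have hPMP : ((P⁻¹ : GL (Fin 2) F) : Matrix (Fin 2) (Fin 2) F) * (M * P) =
      !![0, -N.det; 1, N.trace] := by
    rw [hP, ← mul_assoc, Units.inv_mul, one_mul]
  refine ⟨Q * P⁻¹, ?_⟩
  calc ((Q * P⁻¹ : GL (Fin 2) F) : Matrix (Fin 2) (Fin 2) F) * M * (Q * P⁻¹)⁻¹
      = (Q : Matrix (Fin 2) (Fin 2) F) * (P⁻¹ * (M * P)) * Q⁻¹ := by simp [mul_assoc]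
    _ = N := by rw [hPMP, ← hQ, mul_assoc, Units.mul_inv, mul_one]

end Matrix

namespace Matrix.SpecialLinearGroup

variable {n R : Type*} [Fintype n] [DecidableEq n] [CommRing R]

def conjGL (g : GL n R) : SpecialLinearGroup n R →* SpecialLinearGroup n R where
  toFun A := ⟨(g : Matrix n n R) * A * g⁻¹, by rw [det_units_conj, A.2]⟩
  map_one' := Subtype.ext (by simp)
  map_mul' A B := Subtype.ext <| by
    change _ = (g : Matrix n n R) * A * g⁻¹ * ((g : Matrix n n R) * B * g⁻¹)
    simp [mul_assoc]

theorem ne_scalar_of_ne_one_of_ne_neg_one [NoZeroDivisors R] {A : SpecialLinearGroup (Fin 2) R}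
    (h1 : A ≠ 1) (h2 : (A : Matrix (Fin 2) (Fin 2) R) ≠ -1) (r : R) :
    (A : Matrix (Fin 2) (Fin 2) R) ≠ scalar (Fin 2) r := by
  intro hA
  have hr : r * r = 1 := by
    rw [← A.det_coe, hA]
    simp [sq]
  rcases mul_self_eq_one_iff.1 hr with rfl | rfl
  · exact h1 (Subtype.ext (by rw [hA, map_one, coe_one]))
  · exact h2 (by rw [hA, map_neg, map_one])

end Matrix.SpecialLinearGroup

theorem map_evalWord {G H : Type} [Group G] [Group H] (φ : G →* H) (w : FreeGroup (Fin 2))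
    (x y : G) : φ (evalWord w x y) = evalWord w (φ x) (φ y) := by
  simp only [evalWord, ← MonoidHom.comp_apply]
  congr 1
  ext i
  fin_cases i <;> simp

theorem word_value_of_eq_trace_general
    (F : Type) [Field F]
    (w : FreeGroup (Fin 2))
    (z : SL2 F) (hz1 : z ≠ 1) (hz2 : (z : Matrix (Fin 2) (Fin 2) F) ≠ -1)
    (x y : SL2 F) (hz : z = evalWord w x y) :
    ∀ z' : SL2 F, z' ≠ 1 → (z' : Matrix (Fin 2) (Fin 2) F) ≠ -1 → trSL z' = trSL z →
      ∃ x' y' : SL2 F, z' = evalWord w x' y' := by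
  intro z' hz1' hz2' htr
  obtain ⟨g, hg⟩ := exists_units_conj_eq_of_trace_eq_of_det_eq
    (SpecialLinearGroup.ne_scalar_of_ne_one_of_ne_neg_one hz1 hz2)
    (SpecialLinearGroup.ne_scalar_of_ne_one_of_ne_neg_one hz1' hz2')
    htr.symm (by rw [z.det_coe, z'.det_coe])
  refine ⟨SpecialLinearGroup.conjGL g x, SpecialLinearGroup.conjGL g y, ?_⟩
  rw [← map_evalWord, ← hz]
  exact Subtype.ext hg.symm

/-- If `z ≠ ±id` is a value of a non-trivial word `w` on `SL(2,q)`, then so is every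
`z' ≠ ±id` with the same trace as `z`. -/
theorem word_value_of_eq_trace
    (p e q : ℕ) (hp : p.Prime) (he : 1 ≤ e) (hq : q = p ^ e)
    (F : Type) [Field F] [Fintype F] (hF : Fintype.card F = q)
    (w : FreeGroup (Fin 2)) (hw : w ≠ 1)
    (z : SL2 F) (hz1 : z ≠ 1) (hz2 : (z : Matrix (Fin 2) (Fin 2) F) ≠ -1)
    (x y : SL2 F) (hz : z = evalWord w x y) :
    ∀ z' : SL2 F, z' ≠ 1 → (z' : Matrix (Fin 2) (Fin 2) F) ≠ -1 → trSL z' = trSL z →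
      ∃ x' y' : SL2 F, z' = evalWord w x' y' :=
  word_value_of_eq_trace_general F w z hz1 hz2 x y hz
end
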